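/- Let f : ℕ → ℝ≥0, n ≥ 1, ω = e^{iπ/n}, and p ∈ [2, ∞). Let M_f be the n × n lower triangular Toeplitz matrix with entries f(i-j). Then γ_(p)(M_f) ≤ (1/(2 n^{1-1/p})) ∑_{k=0}^{2n-1} |m_f(ω^k)|, where m_f(x) = ∑_{k=0}^{n-1} f(k) x^k, γ_(p)(M) = inf { Tr_p(B) ‖C‖_{1→2} : BC = M }, and Tr_p(B) = (∑_i (BB^*)[i,i]^{p/2})^{1/p}. -/

import Mathlib

open Complex Finset

noncomputable def colNorm {ι κ 𝕜 : Type*} [Fintype ι] [SeminormedAddCommGroup 𝕜]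
    (C : Matrix ι κ 𝕜) : ℝ :=
  ⨆ j, Real.sqrt (∑ i, ‖C i j‖ ^ 2)

noncomputable def trp {n m : ℕ} (p : ℝ) (B : Matrix (Fin n) (Fin m) ℂ) : ℝ :=
  (∑ i, ((B * B.conjTranspose) i i).re ^ (p / 2)) ^ (1 / p)

noncomputable def gammap {n : ℕ} (p : ℝ) (M : Matrix (Fin n) (Fin n) ℂ) : ℝ :=
  sInf {r : ℝ | ∃ m : ℕ, ∃ B : Matrix (Fin n) (Fin m) ℂ, ∃ C : Matrix (Fin m) (Fin n) ℂ,
    B * C = M ∧ r = trp p B * colNorm C}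

lemma root_sum (N : ℕ) (ω : ℂ) (hω : IsPrimitiveRoot ω N) (m : ℤ) :
    ∑ k ∈ Finset.range N, ω ^ ((k : ℤ) * m) = if (N:ℤ) ∣ m then (N:ℂ) else 0 := by
  have h1 : ∀ k : ℕ, ω ^ ((k : ℤ) * m) = (ω ^ m) ^ k := by
    intro k; rw [mul_comm, zpow_mul]; norm_cast
  simp_rw [h1]
  by_cases h : (N:ℤ) ∣ m
  · have : ω ^ m = 1 := (hω.zpow_eq_one_iff_dvd m).mpr h
    simp [this, h]
  · have hne : ω ^ m ≠ 1 := fun hc => h ((hω.zpow_eq_one_iff_dvd m).mp hc)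
    rw [geom_sum_eq hne]
    have : (ω ^ m) ^ N = 1 := by
      rw [← zpow_natCast, ← zpow_mul, mul_comm, zpow_mul, zpow_natCast, hω.pow_eq_one, one_zpow]
    simp [this, h]

lemma diag_re_nonneg {n m : ℕ} (B : Matrix (Fin n) (Fin m) ℂ) (i : Fin n) :
    0 ≤ ((B * B.conjTranspose) i i).re := by
  rw [Matrix.mul_apply]
  simp only [Matrix.conjTranspose_apply]
  rw [Complex.re_sum]
  refine Finset.sum_nonneg fun k _ => ?_
  rw [Complex.star_def, Complex.mul_conj]
  simp [Complex.normSq_nonneg]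

lemma trp_nonneg {n m : ℕ} (p : ℝ) (B : Matrix (Fin n) (Fin m) ℂ) : 0 ≤ trp p B :=
  Real.rpow_nonneg (Finset.sum_nonneg fun i _ => Real.rpow_nonneg (diag_re_nonneg B i) _) _

lemma colNorm_nonneg {ι κ : Type*} [Fintype ι] (C : Matrix ι κ ℂ) : 0 ≤ colNorm C :=
  Real.iSup_nonneg fun _ => Real.sqrt_nonneg _

lemma small_dvd (N : ℕ) (m : ℤ) (h1 : -(N:ℤ) < m) (h2 : m < N) : ((N:ℤ) ∣ m ↔ m = 0) := by
  constructor
  · intro h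
    by_contra hm
    have := Int.le_of_dvd (abs_pos.mpr hm) ((dvd_abs _ _).mpr h)
    rcases abs_cases m with ⟨he, _⟩ | ⟨he, _⟩ <;> omega
  · rintro rfl; exact dvd_zero _

set_option maxHeartbeats 1000000 in
theorem stmt_11 (n : ℕ) (hn : 1 ≤ n) (ω : ℂ)
    (hω : ω = Complex.exp (Real.pi * Complex.I / n))
    (p : ℝ) (hp : 2 ≤ p)
    (f : ℕ → ℝ) (hf : ∀ k, 0 ≤ f k)
    (Mf : Matrix (Fin n) (Fin n) ℂ)
    (hM : ∀ i j : Fin n, Mf i j = if j ≤ i then (f ((i : ℕ) - j) : ℂ) else 0) :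
    gammap p Mf ≤
      (1 / (2 * (n : ℝ) ^ (1 - 1 / p))) * ∑ k ∈ Finset.range (2 * n),
        ‖∑ j ∈ Finset.range n, (f j : ℂ) * (ω ^ k) ^ j‖ := by
  have hn0 : (0:ℝ) < n := by positivity
  have hN : (0:ℕ) < 2 * n := by omega
  set N := 2 * n with hNdef
  have hNr : (0:ℝ) < N := by positivity
  have hprim : IsPrimitiveRoot ω N := by
    have h := Complex.isPrimitiveRoot_exp N (by omega)
    have heq : 2 * (Real.pi:ℂ) * Complex.I / (N:ℕ) = Real.pi * Complex.I / n := by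
      have h2 : ((N:ℕ):ℂ) = 2 * (n:ℂ) := by push_cast [hNdef]; ring
      have hn' : (n:ℂ) ≠ 0 := by exact_mod_cast hn0.ne'
      rw [h2]; field_simp
    rwa [heq, ← hω] at h
  have hω0 : ω ≠ 0 := by rw [hω]; exact Complex.exp_ne_zero _
  have habsω : ‖ω‖ = 1 := by
    rw [hω]
    have : (Real.pi:ℂ) * Complex.I / n = ((Real.pi / n : ℝ):ℂ) * Complex.I := by
      push_cast; ring
    rw [this, Complex.norm_exp_ofReal_mul_I]
  have habsz : ∀ z : ℤ, ‖ω ^ z‖ = 1 := by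
    intro z; rw [norm_zpow, habsω, one_zpow]
  set a : ℕ → ℂ := fun k => ∑ j ∈ Finset.range n, (f j : ℂ) * (ω ^ k) ^ j with ha
  set g : ℕ → ℝ := fun k => Real.sqrt (‖a k‖ / N) with hg
  set u : ℕ → ℂ := fun k => if a k = 0 then 0 else a k / (‖a k‖ : ℂ) with hu
  set c : ℕ → ℂ := fun k => u k * g k with hc
  set Sr : ℝ := ∑ k ∈ Finset.range N, ‖a k‖ with hSr
  have hSr0 : 0 ≤ Sr := Finset.sum_nonneg fun k _ => norm_nonneg _
  have hg0 : ∀ k, 0 ≤ g k := fun k => Real.sqrt_nonneg _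
  have hgsq : ∀ k, g k * g k = ‖a k‖ / N := by
    intro k; exact Real.mul_self_sqrt (by positivity)
  have habsc : ∀ k, ‖c k‖ = g k := by
    intro k
    by_cases h : a k = 0
    · simp [hc, hu, hg, h]
    · have h1 : ‖u k‖ = 1 := by
        simp only [hu, if_neg h, norm_div, Complex.norm_real, norm_norm]
        exact div_self (norm_ne_zero_iff.mpr h)
      simp only [hc, norm_mul, h1, Complex.norm_real, Real.norm_eq_abs, _root_.abs_of_nonneg (hg0 k), one_mul]
  have hcg : ∀ k, c k * (g k : ℂ) = a k / N := by
    intro k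
    by_cases h : a k = 0
    · simp [hc, hu, hg, h]
    · have hgg : (g k : ℂ) * (g k : ℂ) = (‖a k‖ : ℂ) / N := by
        rw [← Complex.ofReal_mul, hgsq k]; push_cast; ring
      have habs0 : (‖a k‖ : ℂ) ≠ 0 := by
        simpa using h
      calc c k * (g k : ℂ) = u k * ((g k : ℂ) * g k) := by simp only [hc]; ring
        _ = a k / (‖a k‖ : ℂ) * ((‖a k‖ : ℂ) / N) := by
            rw [hgg]; simp only [hu, if_neg h]
        _ = a k / N := by field_simp
  -- rewrite a with zpow
  have hA : ∀ k : ℕ, a k = ∑ l ∈ Finset.range n, (f l : ℂ) * ω ^ ((k:ℤ) * l) := by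
    intro k
    refine Finset.sum_congr rfl fun l _ => ?_
    rw [← pow_mul, ← zpow_natCast ω (k * l)]
    norm_cast
  -- the factorization
  set B : Matrix (Fin n) (Fin N) ℂ := fun i k => c k * ω ^ (-(((k:ℕ):ℤ) * (i:ℕ))) with hB
  set C : Matrix (Fin N) (Fin n) ℂ := fun k j => (g k : ℂ) * ω ^ (((k:ℕ):ℤ) * (j:ℕ)) with hC
  have hBC : B * C = Mf := by
    ext i j
    rw [Matrix.mul_apply, hM]
    have hterm : ∀ k : Fin N, B i k * C k j
        = ∑ l ∈ Finset.range n, ((f l : ℂ) / N) * ω ^ (((k:ℕ):ℤ) * ((l:ℤ) + (j:ℕ) - (i:ℕ))) := by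
      intro k
      calc B i k * C k j
          = (c k * g k) * (ω ^ ((-(((k:ℕ):ℤ) * (i:ℕ))) + ((k:ℕ):ℤ) * ((j:ℕ):ℤ))) := by
            simp only [hB, hC]; rw [zpow_add₀ hω0]; ring
        _ = (a k / N) * ω ^ (((k:ℕ):ℤ) * (((j:ℕ):ℤ) - ((i:ℕ):ℤ))) := by
            rw [hcg]; congr 1; ring
        _ = ∑ l ∈ Finset.range n, ((f l : ℂ) / N) * ω ^ (((k:ℕ):ℤ) * ((l:ℤ) + (j:ℕ) - (i:ℕ))) := by
            rw [hA, Finset.sum_div, Finset.sum_mul]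
            refine Finset.sum_congr rfl fun l _ => ?_
            have e2 : (f l : ℂ) * ω ^ (((k:ℕ):ℤ) * l) / N * ω ^ (((k:ℕ):ℤ) * (((j:ℕ):ℤ) - ((i:ℕ):ℤ)))
                = (f l : ℂ) / N * (ω ^ (((k:ℕ):ℤ) * l) * ω ^ (((k:ℕ):ℤ) * (((j:ℕ):ℤ) - ((i:ℕ):ℤ)))) := by
              ring
            rw [e2, ← zpow_add₀ hω0]
            congr 2
            ring
    have hksum : ∀ l : ℕ, ∑ k : Fin N, ((f l : ℂ) / N) * ω ^ (((k:ℕ):ℤ) * ((l:ℤ) + (j:ℕ) - (i:ℕ)))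
        = ((f l : ℂ) / N) * ∑ k ∈ Finset.range N, ω ^ ((k:ℤ) * ((l:ℤ) + (j:ℕ) - (i:ℕ))) := by
      intro l
      rw [← Finset.mul_sum,
        Fin.sum_univ_eq_sum_range (fun k => ω ^ ((k:ℤ) * ((l:ℤ) + (j:ℕ) - (i:ℕ))))]
    have hroot : ∀ l ∈ Finset.range n,
        ((f l : ℂ) / N) * ∑ k ∈ Finset.range N, ω ^ ((k:ℤ) * ((l:ℤ) + (j:ℕ) - (i:ℕ)))
        = if (l:ℤ) + (j:ℕ) - (i:ℕ) = 0 then (f l : ℂ) else 0 := by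
      intro l hl
      have hl' := Finset.mem_range.mp hl
      have hi := i.isLt
      have hj := j.isLt
      rw [root_sum N ω hprim]
      have hiff := small_dvd N ((l:ℤ) + (j:ℕ) - (i:ℕ))
        (by push_cast [hNdef]; omega) (by push_cast [hNdef]; omega)
      rw [if_congr hiff rfl rfl]
      have hN' : ((N:ℕ):ℂ) ≠ 0 := by exact_mod_cast hNr.ne'
      split
      · field_simp
      · ring
    calc ∑ k : Fin N, B i k * C k j
        = ∑ k : Fin N, ∑ l ∈ Finset.range n,
            ((f l : ℂ) / N) * ω ^ (((k:ℕ):ℤ) * ((l:ℤ) + (j:ℕ) - (i:ℕ))) :=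
          Finset.sum_congr rfl fun k _ => hterm k
      _ = ∑ l ∈ Finset.range n, ∑ k : Fin N,
            ((f l : ℂ) / N) * ω ^ (((k:ℕ):ℤ) * ((l:ℤ) + (j:ℕ) - (i:ℕ))) := Finset.sum_comm
      _ = ∑ l ∈ Finset.range n,
            ((f l : ℂ) / N) * ∑ k ∈ Finset.range N, ω ^ ((k:ℤ) * ((l:ℤ) + (j:ℕ) - (i:ℕ))) :=
          Finset.sum_congr rfl fun l _ => hksum l
      _ = ∑ l ∈ Finset.range n, if (l:ℤ) + (j:ℕ) - (i:ℕ) = 0 then (f l : ℂ) else 0 :=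
          Finset.sum_congr rfl hroot
      _ = if j ≤ i then ((f ((i:ℕ) - (j:ℕ)) : ℝ) : ℂ) else 0 := by
          by_cases hji : j ≤ i
          · rw [if_pos hji]
            have hji' : (j:ℕ) ≤ (i:ℕ) := hji
            have hmem : (i:ℕ) - (j:ℕ) ∈ Finset.range n := Finset.mem_range.mpr (by omega)
            have hcongr : ∀ l ∈ Finset.range n,
                (if (l:ℤ) + (j:ℕ) - (i:ℕ) = 0 then (f l : ℂ) else 0)
                = if l = (i:ℕ) - (j:ℕ) then (f l : ℂ) else 0 :=
              fun l _ => if_congr (by omega) rfl rfl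
            rw [Finset.sum_congr rfl hcongr,
              Finset.sum_ite_eq' (Finset.range n) ((i:ℕ)-(j:ℕ)) (fun l => (f l : ℂ)),
              if_pos hmem]
          · rw [if_neg hji]
            have h2 : (i:ℕ) < (j:ℕ) := Fin.lt_def.mp (not_le.mp hji)
            exact Finset.sum_eq_zero fun l _ => if_neg (by omega)
  -- norms of B and C
  have hnormB : ∀ (i : Fin n) (k : Fin N), Complex.normSq (B i k) = g k ^ 2 := by
    intro i k
    have h1 : ‖B i k‖ = g k := by
      simp only [hB]
      rw [norm_mul, habsc, habsz]
      ring
    rw [← Complex.sq_norm, h1]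
  have hsumg : ∑ k : Fin N, g (k:ℕ) ^ 2 = Sr / N := by
    rw [Fin.sum_univ_eq_sum_range (fun k => g k ^ 2), hSr, Finset.sum_div]
    refine Finset.sum_congr rfl fun k _ => ?_
    rw [sq, hgsq]
  have hdiag : ∀ i : Fin n, ((B * B.conjTranspose) i i).re = Sr / N := by
    intro i
    rw [Matrix.mul_apply]
    simp only [Matrix.conjTranspose_apply]
    rw [Complex.re_sum, ← hsumg]
    refine Finset.sum_congr rfl fun k _ => ?_
    rw [Complex.star_def, Complex.mul_conj, Complex.ofReal_re, hnormB]
  have htrp : trp p B = ((n:ℝ) * (Sr / N) ^ (p/2)) ^ (1/p) := by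
    rw [trp]
    congr 1
    rw [Finset.sum_congr rfl fun i _ => by rw [hdiag i]]
    rw [Finset.sum_const, Finset.card_univ, Fintype.card_fin, nsmul_eq_mul]
  have hcol : colNorm C = Real.sqrt (Sr / N) := by
    rw [colNorm]
    have hjv : ∀ j : Fin n, Real.sqrt (∑ k : Fin N, ‖C k j‖ ^ 2) = Real.sqrt (Sr / N) := by
      intro j
      rw [← hsumg]
      congr 1
      refine Finset.sum_congr rfl fun k _ => ?_
      have h1 : ‖C k j‖ = g k := by
        simp only [hC]
        rw [norm_mul, Complex.norm_real, Real.norm_eq_abs,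
          _root_.abs_of_nonneg (hg0 k), habsz]
        ring
      rw [h1]
    haveI : Nonempty (Fin n) := ⟨⟨0, by omega⟩⟩
    rw [iSup_congr hjv, ciSup_const]
  -- final arithmetic
  have hfinal : trp p B * colNorm C = (1 / (2 * (n : ℝ) ^ (1 - 1 / p))) * Sr := by
    rw [htrp, hcol]
    have hp0 : (0:ℝ) < p := by linarith
    have hx0 : (0:ℝ) ≤ Sr / N := by positivity
    have hnp : (0:ℝ) < (n:ℝ) ^ (1 - 1/p) := Real.rpow_pos_of_pos hn0 _
    have hN2 : ((N:ℕ):ℝ) = 2 * (n:ℝ) := by push_cast [hNdef]; ring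
    have e1 : ((n:ℝ) * (Sr / N) ^ (p/2)) ^ (1/p) = (n:ℝ) ^ ((1:ℝ)/p) * Real.sqrt (Sr / N) := by
      rw [Real.mul_rpow hn0.le (Real.rpow_nonneg hx0 _), ← Real.rpow_mul hx0,
        show p/2 * (1/p) = 1/2 by field_simp, Real.sqrt_eq_rpow]
    rw [e1, mul_assoc, Real.mul_self_sqrt hx0, hN2]
    have hp0' : p ≠ 0 := hp0.ne'
    rw [show (1:ℝ) - 1/p = (p-1)/p by field_simp]
    have e2 : (n:ℝ) ^ ((1:ℝ)/p) * (n:ℝ) ^ ((p-1)/p) = n := by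
      rw [← Real.rpow_add hn0]
      rw [show (1:ℝ)/p + (p-1)/p = 1 by field_simp; ring, Real.rpow_one]
    field_simp
    linear_combination Sr * e2
  have hmem : (1 / (2 * (n : ℝ) ^ (1 - 1 / p))) * Sr ∈
      {r : ℝ | ∃ m : ℕ, ∃ B : Matrix (Fin n) (Fin m) ℂ, ∃ C : Matrix (Fin m) (Fin n) ℂ,
        B * C = Mf ∧ r = trp p B * colNorm C} :=
    ⟨N, B, C, hBC, hfinal.symm⟩
  have hbdd : BddBelow {r : ℝ | ∃ m : ℕ, ∃ B : Matrix (Fin n) (Fin m) ℂ,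
      ∃ C : Matrix (Fin m) (Fin n) ℂ, B * C = Mf ∧ r = trp p B * colNorm C} := by
    refine ⟨0, fun r hr => ?_⟩
    obtain ⟨m, B', C', _, rfl⟩ := hr
    exact mul_nonneg (trp_nonneg p B') (colNorm_nonneg C')
  exact csInf_le hbdd hmem
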